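/- Let ζ ∈ (0, 1) and let 0 < ξ < 1 be small enough that 1 + (4/(ζ²-1))·(ξ/(1-ξ)) > 0. Then 1 - ζ - 2α₀ < 0, where α₀ = (1/2)(1 - ξ(1 + 2/|1-ζ| - 2/|1+ζ|))/(1 - ξ). That is, for inner pullers the coefficient A = (f_p L/(32πμ))(1 - ζ - 2α₀) is negative whenever f_p, L, μ > 0. -/

import Mathlib

open Real

/-- The leading-order force splitting parameter `α₀`. -/
noncomputable def forceSplitting (ζ ξ : ℝ) : ℝ :=
  (1 / 2) * (1 - ξ * (1 + 2 / |1 - ζ| - 2 / |1 + ζ|)) / (1 - ξ)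

section

variable {ζ ξ : ℝ}

lemma one_sub_sub_two_mul_forceSplitting (hζ₀ : -1 < ζ) (hζ₁ : ζ < 1) (hξ : ξ ≠ 1) :
    1 - ζ - 2 * forceSplitting ζ ξ =
      ζ * (4 * ξ - (1 - ζ ^ 2) * (1 - ξ)) / ((1 - ζ ^ 2) * (1 - ξ)) := by
  have hm : 1 - ζ ≠ 0 := by linarith
  have hp : 1 + ζ ≠ 0 := by linarith
  have hξ' : 1 - ξ ≠ 0 := sub_ne_zero.mpr (Ne.symm hξ)
  have hsq : 1 - ζ ^ 2 = (1 - ζ) * (1 + ζ) := by ring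
  rw [forceSplitting, abs_of_pos (by linarith : 0 < 1 - ζ), abs_of_pos (by linarith : 0 < 1 + ζ),
    hsq]
  field_simp
  ring

lemma smallness_iff (hζ : ζ ^ 2 < 1) (hξ : ξ < 1) :
    0 < 1 + 4 / (ζ ^ 2 - 1) * (ξ / (1 - ξ)) ↔ 4 * ξ < (1 - ζ ^ 2) * (1 - ξ) := by
  have hden : 0 < (1 - ζ ^ 2) * (1 - ξ) := mul_pos (by linarith) (by linarith)
  have hrw : 1 + 4 / (ζ ^ 2 - 1) * (ξ / (1 - ξ)) =
      ((1 - ζ ^ 2) * (1 - ξ) - 4 * ξ) / ((1 - ζ ^ 2) * (1 - ξ)) := by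
    have h₁ : ζ ^ 2 - 1 ≠ 0 := by linarith
    have h₂ : 1 - ζ ^ 2 ≠ 0 := by linarith
    have h₃ : 1 - ξ ≠ 0 := by linarith
    field_simp
    ring
  rw [hrw, div_pos_iff_of_pos_right hden, sub_pos]

lemma one_sub_sub_two_mul_forceSplitting_neg (hζ₀ : 0 < ζ) (hζ₁ : ζ < 1) (hξ : ξ < 1)
    (hsmall : 4 * ξ < (1 - ζ ^ 2) * (1 - ξ)) :
    1 - ζ - 2 * forceSplitting ζ ξ < 0 := by
  rw [one_sub_sub_two_mul_forceSplitting (by linarith) hζ₁ hξ.ne]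
  exact div_neg_of_neg_of_pos (mul_neg_of_pos_of_neg hζ₀ (by linarith))
    (mul_pos (by nlinarith) (by linarith))

end

theorem inner_puller_negative_general (ζ ξ : ℝ) (hζ0 : 0 < ζ) (hζ1 : ζ < 1)
    (hξ1 : ξ < 1)
    (hsmall : 1 + (4 / (ζ ^ 2 - 1)) * (ξ / (1 - ξ)) > 0) :
    1 - ζ - 2 * ((1 / 2) * (1 - ξ * (1 + 2 / |1 - ζ| - 2 / |1 + ζ|)) / (1 - ξ)) < 0 ∧
    ∀ fp L μ : ℝ, 0 < fp → 0 < L → 0 < μ →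
      (fp * L / (32 * Real.pi * μ)) *
        (1 - ζ - 2 * ((1 / 2) * (1 - ξ * (1 + 2 / |1 - ζ| - 2 / |1 + ζ|)) / (1 - ξ))) < 0 := by
  have hζsq : ζ ^ 2 < 1 := by nlinarith
  have hneg : 1 - ζ - 2 * forceSplitting ζ ξ < 0 :=
    one_sub_sub_two_mul_forceSplitting_neg hζ0 hζ1 hξ1 ((smallness_iff hζsq hξ1).mp hsmall)
  exact ⟨hneg, fun fp L μ hfp hL hμ => mul_neg_of_pos_of_neg (by positivity) hneg⟩

theorem inner_puller_negative (ζ ξ : ℝ) (hζ0 : 0 < ζ) (hζ1 : ζ < 1)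
    (hξ0 : 0 < ξ) (hξ1 : ξ < 1)
    (hsmall : 1 + (4 / (ζ ^ 2 - 1)) * (ξ / (1 - ξ)) > 0) :
    1 - ζ - 2 * ((1 / 2) * (1 - ξ * (1 + 2 / |1 - ζ| - 2 / |1 + ζ|)) / (1 - ξ)) < 0 ∧
    ∀ fp L μ : ℝ, 0 < fp → 0 < L → 0 < μ →
      (fp * L / (32 * Real.pi * μ)) *
        (1 - ζ - 2 * ((1 / 2) * (1 - ξ * (1 + 2 / |1 - ζ| - 2 / |1 + ζ|)) / (1 - ξ))) < 0 :=
  inner_puller_negative_general ζ ξ hζ0 hζ1 hξ1 hsmall
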